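/- Let K be a d-dimensional smoothing kernel that is β-Hölder continuous and satisfies ∫₀^∞ K(t)t^{β+d-1} dt < ∞. Then for any probability measure P with density f, for all h ∈ (0,1] and r ≥ 1: ‖f_{P,h} − f‖₁ ≤ C ( r^d ‖f_{P,h} − f‖_∞ + P(H_{r/2}) + (h/r)^β ), where H_{r/2} = {x : ‖x‖ > r/2} and C depends only on K, d, β. -/

import Mathlib

open MeasureTheory Set Metric

/-!
Write `φ = f_{P,h} - f`. The kernel has unit mass, so `∫ φ = 0`, and `φ ≥ -f` because
`f_{P,h} ≥ 0`. Off the ball `B = B_{r/2}` this gives `|φ| ≤ φ + 2 f` and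
`∫_{Bᶜ} φ = -∫_B φ ≤ ∫_B |φ|`, hence
`‖φ‖₁ ≤ 2 ∫_B |φ| + 2 P(H_{r/2}) ≤ 2 λ(B_{r/2}) ‖φ‖_∞ + 2 P(H_{r/2})`.
-/

theorem integral_abs_le_of_integral_eq_zero {α : Type*} [MeasurableSpace α] {μ : Measure α}
    {φ g : α → ℝ} (hφ : Integrable φ μ) (hg : Integrable g μ) (hφ₀ : ∫ x, φ x ∂μ = 0)
    (hg₀ : ∀ x, 0 ≤ g x) (hφg : ∀ x, -g x ≤ φ x)
    {s : Set α} (hs : MeasurableSet s) :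
    ∫ x, |φ x| ∂μ ≤ 2 * ∫ x in s, |φ x| ∂μ + 2 * ∫ x in sᶜ, g x ∂μ := by
  have h_out : ∫ x in sᶜ, φ x ∂μ = -∫ x in s, φ x ∂μ := by
    linarith [integral_add_compl hs hφ]
  have h_in : -∫ x in s, φ x ∂μ ≤ ∫ x in s, |φ x| ∂μ :=
    (neg_le_abs _).trans (abs_integral_le_integral_abs)
  have h_compl : ∫ x in sᶜ, |φ x| ∂μ ≤ ∫ x in sᶜ, φ x ∂μ + 2 * ∫ x in sᶜ, g x ∂μ := by
    rw [← integral_const_mul, ← integral_add hφ.integrableOn (hg.const_mul 2).integrableOn]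
    refine setIntegral_mono hφ.abs.integrableOn (hφ.add (hg.const_mul 2)).integrableOn fun x => ?_
    exact abs_le.2 ⟨by linarith [hφg x], by linarith [hg₀ x]⟩
  linarith [integral_add_compl hs hφ.abs]

section Convolution

variable {G : Type*} [MeasurableSpace G] [AddGroup G] [MeasurableAdd₂ G] [MeasurableNeg G]
  {μ : Measure G} [SFinite μ] [μ.IsAddRightInvariant] {k f : G → ℝ}

theorem MeasureTheory.Integrable.integral_mul_sub (hk : Integrable k μ) (hf : Integrable f μ) :
    Integrable (fun x => ∫ t, k (x - t) * f t ∂μ) μ :=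
  hf.integrable_convolution (ContinuousLinearMap.mul ℝ ℝ).flip hk

theorem integral_integral_mul_sub (hk : Integrable k μ) (hf : Integrable f μ) :
    ∫ x, ∫ t, k (x - t) * f t ∂μ ∂μ = (∫ x, k x ∂μ) * ∫ x, f x ∂μ :=
  integral_convolution (ContinuousLinearMap.mul ℝ ℝ).flip hf hk

end Convolution

section AddHaar

theorem norm_div_eq_norm_inv_smul {E : Type*} [NormedAddCommGroup E] [NormedSpace ℝ E] {h : ℝ}
    (hh : 0 < h) (u : E) : ‖u‖ / h = ‖h⁻¹ • u‖ := by
  rw [norm_smul, Real.norm_of_nonneg (inv_nonneg.2 hh.le), div_eq_inv_mul]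

variable {E : Type*} [NormedAddCommGroup E] [NormedSpace ℝ E] [MeasurableSpace E]
  {μ : Measure E} {K : ℝ → ℝ} {h : ℝ} {f : E → ℝ}

noncomputable def kernelSmoothing (μ : Measure E) (K : ℝ → ℝ) (h : ℝ) (f : E → ℝ) (x : E) : ℝ :=
  (h ^ Module.finrank ℝ E)⁻¹ * ∫ t, K (‖x - t‖ / h) * f t ∂μ

theorem kernelSmoothing_nonneg (hK : ∀ t, 0 ≤ K t) (hf : ∀ x, 0 ≤ f x) (hh : 0 ≤ h) (x : E) :
    0 ≤ kernelSmoothing μ K h f x :=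
  mul_nonneg (by positivity) (integral_nonneg fun t => mul_nonneg (hK _) (hf t))

variable [FiniteDimensional ℝ E] [BorelSpace E] [μ.IsAddHaarMeasure]

theorem MeasureTheory.Integrable.comp_norm_div (hK : Integrable (fun u => K ‖u‖) μ) (hh : 0 < h) :
    Integrable (fun u => K (‖u‖ / h)) μ := by
  simpa only [norm_div_eq_norm_inv_smul hh] using hK.comp_smul (inv_ne_zero hh.ne')

theorem integral_comp_norm_div (K : ℝ → ℝ) (hh : 0 < h) :
    ∫ u, K (‖u‖ / h) ∂μ = h ^ Module.finrank ℝ E * ∫ u, K ‖u‖ ∂μ := by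
  simp only [norm_div_eq_norm_inv_smul hh]
  exact Measure.integral_comp_inv_smul_of_nonneg μ (fun u => K ‖u‖) hh.le

theorem setIntegral_abs_closedBall_le {φ : E → ℝ} {M r : ℝ} (hφ : ∀ x, |φ x| ≤ M) (hr : 0 ≤ r)
    (c : E) :
    ∫ x in closedBall c r, |φ x| ∂μ ≤ M * (r ^ Module.finrank ℝ E * μ.real (closedBall 0 1)) := by
  have h_le := norm_setIntegral_le_of_norm_le_const (f := fun x => |φ x|)
    (measure_closedBall_lt_top (μ := μ) (x := c) (r := r)) fun x _ => by simpa using hφ x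
  rw [Real.norm_eq_abs, Measure.addHaar_real_closedBall' μ c hr] at h_le
  exact (le_abs_self _).trans h_le

theorem integrable_kernelSmoothing (hK : Integrable (fun u => K ‖u‖) μ) (hf : Integrable f μ)
    (hh : 0 < h) : Integrable (kernelSmoothing μ K h f) μ :=
  ((hK.comp_norm_div hh).integral_mul_sub hf).const_mul _

theorem integral_kernelSmoothing (hK : Integrable (fun u => K ‖u‖) μ)
    (hK₁ : ∫ u, K ‖u‖ ∂μ = 1) (hf : Integrable f μ) (hh : 0 < h) :
    ∫ x, kernelSmoothing μ K h f x ∂μ = ∫ x, f x ∂μ := by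
  simp only [kernelSmoothing]
  rw [integral_const_mul, integral_integral_mul_sub (hK.comp_norm_div hh) hf,
    integral_comp_norm_div K hh, hK₁, mul_one, inv_mul_cancel_left₀ (pow_pos hh _).ne']

theorem integral_abs_kernelSmoothing_sub_le (hK₀ : ∀ t, 0 ≤ K t)
    (hK : Integrable (fun u => K ‖u‖) μ) (hK₁ : ∫ u, K ‖u‖ ∂μ = 1) (hf₀ : ∀ x, 0 ≤ f x)
    (hf : Integrable f μ) (hh : 0 < h) {r M : ℝ} (hr : 0 ≤ r)
    (hM : ∀ x, |kernelSmoothing μ K h f x - f x| ≤ M) :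
    ∫ x, |kernelSmoothing μ K h f x - f x| ∂μ ≤
      2 * (M * (r ^ Module.finrank ℝ E * μ.real (closedBall 0 1)))
        + 2 * ∫ x in {x | r < ‖x‖}, f x ∂μ := by
  have h_int : Integrable (fun x => kernelSmoothing μ K h f x - f x) μ :=
    (integrable_kernelSmoothing hK hf hh).sub hf
  have h_zero : ∫ x, kernelSmoothing μ K h f x - f x ∂μ = 0 := by
    rw [integral_sub (integrable_kernelSmoothing hK hf hh) hf,
      integral_kernelSmoothing hK hK₁ hf hh, sub_self]
  have h_ge : ∀ x, -f x ≤ kernelSmoothing μ K h f x - f x := fun x => by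
    linarith [kernelSmoothing_nonneg (μ := μ) hK₀ hf₀ hh.le x]
  have h_tail : (closedBall (0 : E) r)ᶜ = {x | r < ‖x‖} := by
    ext x; simp
  have key := integral_abs_le_of_integral_eq_zero h_int hf h_zero hf₀ h_ge
    (measurableSet_closedBall (x := 0) (ε := r))
  rw [h_tail] at key
  linarith [setIntegral_abs_closedBall_le (μ := μ) hM hr 0]

end AddHaar

theorem kernelSmoothing_euclideanSpace {d : ℕ} (K : ℝ → ℝ) (h : ℝ)
    (f : EuclideanSpace ℝ (Fin d) → ℝ) (x : EuclideanSpace ℝ (Fin d)) :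
    kernelSmoothing volume K h f x = (h ^ d)⁻¹ * ∫ x', K (‖x - x'‖ / h) * f x' := by
  rw [kernelSmoothing, finrank_euclideanSpace_fin]


theorem stmt6_general (d : ℕ) (K : ℝ → ℝ) (β : ℝ)
    (hK_nonneg : ∀ r, 0 ≤ K r)
    (hK_int : Integrable (fun x : EuclideanSpace ℝ (Fin d) => K ‖x‖))
    (hK_one : ∫ x : EuclideanSpace ℝ (Fin d), K ‖x‖ = 1)
    (f : EuclideanSpace ℝ (Fin d) → ℝ)
    (hf_nonneg : ∀ x, 0 ≤ f x)
    (hf_int : Integrable f) :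
    ∃ C > 0, ∀ (h r : ℝ), 0 < h → h ≤ 1 → 1 ≤ r →
      ∀ M : ℝ, (∀ x : EuclideanSpace ℝ (Fin d),
          |(h ^ d)⁻¹ * (∫ x', K (‖x - x'‖ / h) * f x') - f x| ≤ M) →
        ∫ x : EuclideanSpace ℝ (Fin d),
            |(h ^ d)⁻¹ * (∫ x', K (‖x - x'‖ / h) * f x') - f x|
          ≤ C * (r ^ d * M
              + (∫ x in {x : EuclideanSpace ℝ (Fin d) | r / 2 < ‖x‖}, f x)
              + (h / r) ^ β) := by
  set V := volume.real (closedBall (0 : EuclideanSpace ℝ (Fin d)) 1)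
  refine ⟨2 * V + 2, by positivity, fun h r hh _ hr M hM => ?_⟩
  simp only [← kernelSmoothing_euclideanSpace] at hM ⊢
  have key := integral_abs_kernelSmoothing_sub_le hK_nonneg hK_int hK_one hf_nonneg hf_int hh
    (r := r / 2) (by positivity) hM
  rw [finrank_euclideanSpace_fin] at key
  have h_pow : (r / 2) ^ d ≤ r ^ d := pow_le_pow_left₀ (by positivity) (by linarith) d
  have hM₀ : 0 ≤ M := (abs_nonneg _).trans (hM 0)
  have hT : 0 ≤ ∫ x in {x : EuclideanSpace ℝ (Fin d) | r / 2 < ‖x‖}, f x :=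
    integral_nonneg fun x => hf_nonneg x
  have hP : 0 ≤ (h / r) ^ β := Real.rpow_nonneg (by positivity) β
  have hV : 0 ≤ V := measureReal_nonneg
  have hrM : 0 ≤ r ^ d * M := mul_nonneg (by positivity) hM₀
  nlinarith [mul_le_mul_of_nonneg_right h_pow (mul_nonneg hM₀ hV), mul_nonneg hV hT,
    mul_nonneg hV hP]

/-- `‖f_{P,h} − f‖₁ ≤ C (r^d ‖f_{P,h} − f‖_∞ + P(H_{r/2}) + (h/r)^β)` for all
`h ∈ (0,1]` and `r ≥ 1`, where the sup-norm is expressed via any uniform bound `M`. -/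
theorem stmt6 (d : ℕ) (hd : 1 ≤ d) (K : ℝ → ℝ) (β c : ℝ) (hβ : 0 < β) (hβ1 : β ≤ 1)
    (hc : 0 < c)
    (hK_nonneg : ∀ r, 0 ≤ K r)
    (hK_bdd : ∃ M, ∀ r, K r ≤ M)
    (hK_anti : AntitoneOn K (Set.Ici (0 : ℝ)))
    (hK_hoelder : ∀ s t : ℝ, 0 ≤ s → 0 ≤ t → |K s - K t| ≤ c * |s - t| ^ β)
    (hK_int : Integrable (fun x : EuclideanSpace ℝ (Fin d) => K ‖x‖))
    (hK_one : ∫ x : EuclideanSpace ℝ (Fin d), K ‖x‖ = 1)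
    (hK_moment : IntegrableOn (fun t : ℝ => K t * t ^ (β + d - 1)) (Set.Ioi 0))
    (f : EuclideanSpace ℝ (Fin d) → ℝ)
    (hf_nonneg : ∀ x, 0 ≤ f x)
    (hf_int : Integrable f)
    (hf_one : ∫ x, f x = 1) :
    ∃ C > 0, ∀ (h r : ℝ), 0 < h → h ≤ 1 → 1 ≤ r →
      ∀ M : ℝ, (∀ x : EuclideanSpace ℝ (Fin d),
          |(h ^ d)⁻¹ * (∫ x', K (‖x - x'‖ / h) * f x') - f x| ≤ M) →
        ∫ x : EuclideanSpace ℝ (Fin d),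
            |(h ^ d)⁻¹ * (∫ x', K (‖x - x'‖ / h) * f x') - f x|
          ≤ C * (r ^ d * M
              + (∫ x in {x : EuclideanSpace ℝ (Fin d) | r / 2 < ‖x‖}, f x)
              + (h / r) ^ β) :=
  stmt6_general d K β hK_nonneg hK_int hK_one f hf_nonneg hf_int
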